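/- For w = (z,t), w' = (z',t') in the Heisenberg group ℍ and their images under the Cayley transform C(z,t) = (2z/(1+|z|²+it), (1−|z|²−it)/(1+|z|²+it)) ∈ S³ ⊂ ℂ², the sphere distance d_{S³}(ζ,η)² = 2|1 − ζ·conj(η)| satisfies d_{S³}(C(w), C(w')) = d_ℍ(w,w') · (4/((1+|z|²)²+t²))^{1/4} · (4/((1+|z'|²)²+t'²))^{1/4}. -/

import Mathlib

open Complex

private theorem stmt_15_aux (z z' : ℂ) (t t' : ℝ) :
    Real.sqrt (2 * ‖1 - ((2 * z / (1 + ‖z‖ ^ 2 + Complex.I * t)) * (starRingEnd ℂ) (2 * z' / (1 + ‖z'‖ ^ 2 + Complex.I * t')) + ((1 - ‖z‖ ^ 2 - Complex.I * t) / (1 + ‖z‖ ^ 2 + Complex.I * t)) * (starRingEnd ℂ) ((1 - ‖z'‖ ^ 2 - Complex.I * t') / (1 + ‖z'‖ ^ 2 + Complex.I * t')))‖) =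
      ((‖z - z'‖) ^ 4 + (t - t' - 2 * (z * (starRingEnd ℂ) z').im) ^ 2) ^ ((1:ℝ)/4)
        * (4 / ((1 + ‖z‖ ^ 2) ^ 2 + t ^ 2)) ^ ((1 : ℝ) / 4)
        * (4 / ((1 + ‖z'‖ ^ 2) ^ 2 + t' ^ 2)) ^ ((1 : ℝ) / 4) := by
  have hAne : ∀ (u : ℂ) (s : ℝ), (1 + (‖u‖ : ℂ) ^ 2 + Complex.I * s) ≠ 0 := by
    intro u s h
    rw [← Complex.ofReal_pow] at h
    have := congrArg Complex.re h
    simp [← Complex.ofReal_pow] at this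
    nlinarith [sq_nonneg (‖u‖)]
  set Δ : ℝ := t - t' - 2 * (z * (starRingEnd ℂ) z').im with hΔ
  set A : ℂ := 1 + (‖z‖ : ℂ) ^ 2 + Complex.I * t with hA
  set A' : ℂ := 1 + (‖z'‖ : ℂ) ^ 2 + Complex.I * t' with hA'
  have hAz : A ≠ 0 := hAne z t
  have hAz' : A' ≠ 0 := hAne z' t'
  have hAc' : (starRingEnd ℂ) A' ≠ 0 := by simpa using hAz'
  have key : 1 - ((2 * z / A) * (starRingEnd ℂ) (2 * z' / A') +
      ((1 - (‖z‖ : ℂ) ^ 2 - Complex.I * t) / A) *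
        (starRingEnd ℂ) ((1 - (‖z'‖ : ℂ) ^ 2 - Complex.I * t') / A')) =
      (((2 * ‖z - z'‖ ^ 2 : ℝ) : ℂ) + ((2 * Δ : ℝ) : ℂ) * Complex.I) /
        (A * (starRingEnd ℂ) A') := by
    have hz : ((‖z‖ : ℂ)) ^ 2 = z * (starRingEnd ℂ) z := by
      rw [← Complex.ofReal_pow, Complex.sq_norm, Complex.mul_conj]
    have hz' : ((‖z'‖ : ℂ)) ^ 2 = z' * (starRingEnd ℂ) z' := by
      rw [← Complex.ofReal_pow, Complex.sq_norm, Complex.mul_conj]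
    have hzz : ((‖z - z'‖ : ℂ)) ^ 2 = (z - z') * (starRingEnd ℂ) (z - z') := by
      rw [← Complex.ofReal_pow, Complex.sq_norm, Complex.mul_conj]
    have him : (((z * (starRingEnd ℂ) z').im : ℝ) : ℂ) =
        (z * (starRingEnd ℂ) z' - (starRingEnd ℂ) z * z') / (2 * Complex.I) := by
      have h1 := Complex.sub_conj (z * (starRingEnd ℂ) z')
      rw [map_mul, Complex.conj_conj] at h1
      rw [h1]; push_cast
      field_simp
    have hcA' : (starRingEnd ℂ) A' = 1 + ((‖z'‖ : ℂ)) ^ 2 - Complex.I * t' := by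
      rw [hA']
      simp only [map_add, map_mul, map_one, map_pow, Complex.conj_I, Complex.conj_ofReal]
      ring
    rw [hΔ]
    rw [map_div₀, map_div₀, map_mul]
    simp only [map_sub, map_add, map_mul, map_one, map_ofNat, Complex.conj_conj,
      Complex.conj_I, Complex.conj_ofReal, map_pow]
    push_cast
    rw [him]
    rw [eq_div_iff (mul_ne_zero hAz hAc')]
    field_simp [hAz, hAc']
    rw [hA, hcA', hz, hz', hzz]
    simp only [map_sub]
    ring
  rw [key]
  set D : ℝ := ‖z - z'‖ ^ 4 + Δ ^ 2 with hD
  set S : ℝ := (1 + ‖z‖ ^ 2) ^ 2 + t ^ 2 with hS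
  set S' : ℝ := (1 + ‖z'‖ ^ 2) ^ 2 + t' ^ 2 with hS'
  have hDnn : 0 ≤ D := by positivity
  have hSpos : 0 < S := by positivity
  have hS'pos : 0 < S' := by positivity
  have habsA : ‖A‖ = Real.sqrt S := by
    rw [hA, show (1 + ((‖z‖ : ℂ)) ^ 2 + Complex.I * t)
      = ((1 + ‖z‖ ^ 2 : ℝ) : ℂ) + (t : ℝ) * Complex.I by push_cast; ring,
      Complex.norm_add_mul_I, hS]
  have habsA' : ‖A'‖ = Real.sqrt S' := by
    rw [hA', show (1 + ((‖z'‖ : ℂ)) ^ 2 + Complex.I * t')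
      = ((1 + ‖z'‖ ^ 2 : ℝ) : ℂ) + (t' : ℝ) * Complex.I by push_cast; ring,
      Complex.norm_add_mul_I, hS']
  have habsN : ‖((2 * ‖z - z'‖ ^ 2 : ℝ) : ℂ) + ((2 * Δ : ℝ) : ℂ) * Complex.I‖
      = 2 * Real.sqrt D := by
    rw [Complex.norm_add_mul_I,
      show (2 * ‖z - z'‖ ^ 2) ^ 2 + (2 * Δ) ^ 2 = 2 ^ 2 * D by rw [hD]; ring,
      Real.sqrt_mul (by positivity), Real.sqrt_sq (by norm_num)]
  rw [norm_div, norm_mul, Complex.norm_conj, habsA, habsA', habsN]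
  -- now pure real arithmetic
  have hq : ∀ x : ℝ, 0 ≤ x → (x ^ ((1:ℝ)/4)) ^ 4 = x := by
    intro x hx
    rw [← Real.rpow_natCast (x ^ ((1:ℝ)/4)) 4, ← Real.rpow_mul hx]
    norm_num
  have hp : ∀ x : ℝ, 0 ≤ x → (x ^ 4) ^ ((1:ℝ)/4) = x := by
    intro x hx
    rw [← Real.rpow_natCast x 4, ← Real.rpow_mul hx]
    norm_num
  set L : ℝ := Real.sqrt (2 * (2 * Real.sqrt D / (Real.sqrt S * Real.sqrt S'))) with hL
  set R : ℝ := D ^ ((1:ℝ)/4) * (4 / S) ^ ((1:ℝ)/4) * (4 / S') ^ ((1:ℝ)/4) with hR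
  have hLnn : 0 ≤ L := Real.sqrt_nonneg _
  have hRnn : 0 ≤ R := by
    apply mul_nonneg (mul_nonneg _ _) _ <;> exact Real.rpow_nonneg (by positivity) _
  have h4 : L ^ 4 = R ^ 4 := by
    have hXnn : 0 ≤ 2 * (2 * Real.sqrt D / (Real.sqrt S * Real.sqrt S')) := by positivity
    have hL4 : L ^ 4 = (2 * (2 * Real.sqrt D / (Real.sqrt S * Real.sqrt S'))) ^ 2 := by
      rw [hL, show (4:ℕ) = 2 * 2 by norm_num, pow_mul, Real.sq_sqrt hXnn]
    have hR4 : R ^ 4 = D * (4 / S) * (4 / S') := by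
      rw [hR, mul_pow, mul_pow, hq _ hDnn, hq _ (by positivity), hq _ (by positivity)]
    rw [hL4, hR4, mul_pow, div_pow, mul_pow, mul_pow, Real.sq_sqrt hDnn,
      Real.sq_sqrt hSpos.le, Real.sq_sqrt hS'pos.le]
    field_simp
    ring
  calc L = (L ^ 4) ^ ((1:ℝ)/4) := (hp L hLnn).symm
    _ = (R ^ 4) ^ ((1:ℝ)/4) := by rw [h4]
    _ = R := hp R hRnn


/-- The Korányi distance on the Heisenberg group ℍ = ℂ × ℝ. -/
noncomputable def koranyiDist (w w' : ℂ × ℝ) : ℝ :=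
  ((‖w.1 - w'.1‖) ^ 4
    + (w.2 - w'.2 - 2 * (w.1 * (starRingEnd ℂ) w'.1).im) ^ 2) ^ ((1 : ℝ) / 4)

/-- The distance on the sphere S³ ⊂ ℂ², d(ζ,η)² = 2|1 − ⟨ζ,η⟩|. -/
noncomputable def sphereDist (ζ η : ℂ × ℂ) : ℝ :=
  Real.sqrt (2 * ‖1 - (ζ.1 * (starRingEnd ℂ) η.1 + ζ.2 * (starRingEnd ℂ) η.2)‖)

/-- The Cayley transform from the Heisenberg group to S³. -/
noncomputable def cayley (w : ℂ × ℝ) : ℂ × ℂ :=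
  (2 * w.1 / (1 + ‖w.1‖ ^ 2 + Complex.I * w.2),
   (1 - ‖w.1‖ ^ 2 - Complex.I * w.2) / (1 + ‖w.1‖ ^ 2 + Complex.I * w.2))

theorem stmt_15 (z z' : ℂ) (t t' : ℝ) :
    sphereDist (cayley (z, t)) (cayley (z', t')) =
      koranyiDist (z, t) (z', t')
        * (4 / ((1 + ‖z‖ ^ 2) ^ 2 + t ^ 2)) ^ ((1 : ℝ) / 4)
        * (4 / ((1 + ‖z'‖ ^ 2) ^ 2 + t' ^ 2)) ^ ((1 : ℝ) / 4) := by
  simp only [sphereDist, cayley, koranyiDist]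
  exact stmt_15_aux z z' t t'
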